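/- At any interior critical point a of I₁ (in particular, at the cut-points of an SMML estimator that lies in the interior of its domain), the function x ↦ q(x) f(x|θ̂(x)) is continuous on the data space, i.e. for each j the one-sided limits agree: q_j f(a_j|θ̂_j) = q_{j-1} f(a_j|θ̂_{j-1}). -/

import Mathlib

/-!
Moving `a_j` changes only the cells `U_{j-1}` and `U_j`, transferring mass `r(a_j)` and first
moment `a_j r(a_j)` between them. A cell of mass `q` and moment `m` contributes
`q log q + m θ - q ψ(θ)` with `μ(θ) = m / q` to `C - I₁`, and the implicit dependence through `θ`
has zero derivative since `m - q μ(θ) = 0`. Hence `∂I₁/∂a_j = -r(a_j) (ℓ_{j-1} - ℓ_j)` with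
`ℓ_i = log q_i + a_j θ_i - ψ(θ_i) = log (q_i f(a_j|θ_i) / h(a_j))`, and `r > 0` forces
`ℓ_{j-1} = ℓ_j` at a critical point.
-/

open MeasureTheory Set

lemma hasDerivAt_rightInverse_of_deriv_pos {f f' g : ℝ → ℝ}
    (hf : ∀ x, HasDerivAt f (f' x) x) (hf' : ∀ x, 0 < f' x)
    (hfg : Function.RightInverse g f) (y : ℝ) :
    HasDerivAt g (f' (g y))⁻¹ y := by
  have hmono : StrictMono f := strictMono_of_deriv_pos fun x => (hf x).deriv ▸ hf' x
  have hg_mono : Monotone g := fun y₁ y₂ h => by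
    rw [← hmono.le_iff_le, hfg y₁, hfg y₂]; exact h
  have hg_surj : Function.Surjective g := fun x => ⟨f x, hmono.injective (hfg (f x))⟩
  exact (hf (g y)).of_local_left_inverse
    (hg_mono.continuous_of_surjective hg_surj).continuousAt (hf' _).ne'
    (Filter.Eventually.of_forall hfg)

section IntegralIic

variable {f : ℝ → ℝ}

lemma hasDerivAt_integral_Iic (hf : Continuous f) (hfi : Integrable f) (x : ℝ) :
    HasDerivAt (fun y => ∫ t in Iic y, f t) (f x) x := by
  have hsplit : (fun y => ∫ t in Iic y, f t) =
      fun y => (∫ t in Iic 0, f t) + ∫ t in (0 : ℝ)..y, f t := by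
    funext y
    rw [← intervalIntegral.integral_Iic_sub_Iic hfi.integrableOn hfi.integrableOn]
    ring
  rw [hsplit]
  exact (intervalIntegral.integral_hasDerivAt_right hfi.intervalIntegrable
    (hf.stronglyMeasurableAtFilter _ _) hf.continuousAt).const_add _

lemma strictMono_integral_Iic (hfi : Integrable f) (hf : ∀ x, 0 < f x) :
    StrictMono fun y => ∫ t in Iic y, f t := fun x y hxy => by
  have hpos : 0 < ∫ t in x..y, f t :=
    intervalIntegral.intervalIntegral_pos_of_pos hfi.intervalIntegrable hf hxy
  rw [← intervalIntegral.integral_Iic_sub_Iic hfi.integrableOn hfi.integrableOn] at hpos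
  linarith

lemma integral_Iic_pos (hfi : Integrable f) (hf : ∀ x, 0 < f x) (x : ℝ) :
    0 < ∫ t in Iic x, f t :=
  (setIntegral_nonneg measurableSet_Iic fun t _ => (hf t).le).trans_lt
    (strictMono_integral_Iic hfi hf (sub_one_lt x))

lemma integral_Iic_lt_integral (hfi : Integrable f) (hf : ∀ x, 0 < f x) (x : ℝ) :
    ∫ t in Iic x, f t < ∫ t, f t :=
  (strictMono_integral_Iic hfi hf (lt_add_one x)).trans_le
    (setIntegral_le_integral hfi (Filter.Eventually.of_forall fun t => (hf t).le))

end IntegralIic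

/-- The increment of `G` over the cell `[b i, b (i + 1))`, where `b 0 = -∞` and `b (n + 1) = +∞`
with `G (-∞) = 0` and `G (+∞) = T`. -/
def cellDiff (G : ℝ → ℝ) (T : ℝ) (n : ℕ) (b : ℕ → ℝ) (i : ℕ) : ℝ :=
  (if i = n then T else G (b (i + 1))) - (if i = 0 then 0 else G (b i))

section CellDiff

variable {G : ℝ → ℝ} {T g : ℝ} {n i j : ℕ} {b : ℕ → ℝ}

lemma cellDiff_update_of_ne (hi : i ≠ j) (hi' : i + 1 ≠ j) (t : ℝ) :
    cellDiff G T n (Function.update b j t) i = cellDiff G T n b i := by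
  simp only [cellDiff, Function.update_of_ne hi, Function.update_of_ne hi']

lemma hasDerivAt_cellDiff_update_pred (hj : 1 ≤ j) (hjn : j ≤ n) (hG : HasDerivAt G g (b j)) :
    HasDerivAt (fun t => cellDiff G T n (Function.update b j t) (j - 1)) g (b j) := by
  have hform : (fun t => cellDiff G T n (Function.update b j t) (j - 1)) =
      fun t => G t - (if j - 1 = 0 then 0 else G (b (j - 1))) := by
    funext t
    rw [cellDiff, if_neg (by omega), Nat.sub_add_cancel hj, Function.update_self,
      Function.update_of_ne (by omega)]
  rw [hform]
  exact hG.sub_const _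

lemma hasDerivAt_cellDiff_update_self (hj : 1 ≤ j) (hG : HasDerivAt G g (b j)) :
    HasDerivAt (fun t => cellDiff G T n (Function.update b j t) j) (-g) (b j) := by
  have hform : (fun t => cellDiff G T n (Function.update b j t) j) =
      fun t => (if j = n then T else G (b (j + 1))) - G t := by
    funext t
    rw [cellDiff, if_neg (show j ≠ 0 by omega), Function.update_self,
      Function.update_of_ne (by omega)]
  rw [hform]
  exact hG.const_sub _

lemma cellDiff_pos (hG : StrictMono G) (hG0 : ∀ x, 0 < G x) (hGT : ∀ x, G x < T)
    (hb : ∀ i j, 1 ≤ i → i < j → j ≤ n → b i < b j) (hi : i ≤ n) :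
    0 < cellDiff G T n b i := by
  unfold cellDiff
  split_ifs with hn h0 h0
  · linarith [hG0 0, hGT 0]
  · linarith [hGT (b i)]
  · linarith [hG0 (b (i + 1))]
  · linarith [hG (hb i (i + 1) (by omega) (by omega) (by omega))]

end CellDiff

/-- The contribution to `C - I₁` of a cell of mass `q` and first moment `m`. -/
noncomputable def cellTerm (ψ μ μinv : ℝ → ℝ) (q m : ℝ) : ℝ :=
  q * (Real.log q + μinv (m / q) * μ (μinv (m / q)) - ψ (μinv (m / q)))

noncomputable def cellTermDeriv (ψ μinv : ℝ → ℝ) (q m q' m' : ℝ) : ℝ :=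
  q' * (Real.log q + 1 - ψ (μinv (m / q))) + m' * μinv (m / q)

section CellTerm

variable {ψ μ μinv : ℝ → ℝ}

lemma hasDerivAt_cellTerm (hψ : ∀ θ, HasDerivAt ψ (μ θ) θ) (hμinv : Differentiable ℝ μinv)
    (hinv : Function.RightInverse μinv μ) {q m : ℝ → ℝ} {q' m' s : ℝ}
    (hq : HasDerivAt q q' s) (hm : HasDerivAt m m' s) (hq0 : q s ≠ 0) :
    HasDerivAt (fun t => cellTerm ψ μ μinv (q t) (m t)) (cellTermDeriv ψ μinv (q s) (m s) q' m')
      s := by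
  set θ := fun t => μinv (m t / q t)
  have hθ : HasDerivAt θ (deriv μinv (m s / q s) * ((m' * q s - m s * q') / q s ^ 2)) s :=
    (hμinv _).hasDerivAt.comp s (hm.div hq hq0)
  have hexpand : (fun t => cellTerm ψ μ μinv (q t) (m t)) =ᶠ[nhds s]
      fun t => q t * Real.log (q t) + m t * θ t - q t * ψ (θ t) := by
    filter_upwards [hq.continuousAt.eventually_ne hq0] with t ht
    simp only [cellTerm, θ, hinv _]
    field_simp
  refine (((hq.mul (hq.log hq0)).add (hm.mul hθ)).sub
    (hq.mul ((hψ _).comp s hθ))).congr_of_eventuallyEq hexpand |>.congr_deriv ?_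
  simp only [cellTermDeriv, θ, Function.comp_apply, hinv _]
  field_simp
  ring

lemma hasDerivAt_sum_cellTerm_update (hψ : ∀ θ, HasDerivAt ψ (μ θ) θ)
    (hμinv : Differentiable ℝ μinv) (hinv : Function.RightInverse μinv μ)
    {G H : ℝ → ℝ} {T S g g' : ℝ} {n j : ℕ} {b : ℕ → ℝ} (hj : 1 ≤ j) (hjn : j ≤ n)
    (hG : HasDerivAt G g (b j)) (hH : HasDerivAt H g' (b j))
    (hpred : cellDiff G T n b (j - 1) ≠ 0) (hself : cellDiff G T n b j ≠ 0) :
    HasDerivAt (fun t => ∑ i ∈ Finset.range (n + 1), cellTerm ψ μ μinv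
        (cellDiff G T n (Function.update b j t) i) (cellDiff H S n (Function.update b j t) i))
      (cellTermDeriv ψ μinv (cellDiff G T n b (j - 1)) (cellDiff H S n b (j - 1)) g g' +
        cellTermDeriv ψ μinv (cellDiff G T n b j) (cellDiff H S n b j) (-g) (-g')) (b j) := by
  set φ := fun i t => cellTerm ψ μ μinv
    (cellDiff G T n (Function.update b j t) i) (cellDiff H S n (Function.update b j t) i)
  have hpred_mem : j - 1 ∈ Finset.range (n + 1) := Finset.mem_range.2 (by omega)
  have hself_mem : j ∈ (Finset.range (n + 1)).erase (j - 1) :=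
    Finset.mem_erase.2 ⟨by omega, Finset.mem_range.2 (by omega)⟩
  have hsplit : (fun t => ∑ i ∈ Finset.range (n + 1), φ i t) = fun t => φ (j - 1) t +
      (φ j t + ∑ i ∈ ((Finset.range (n + 1)).erase (j - 1)).erase j, φ i (b j)) := by
    funext t
    rw [← Finset.add_sum_erase _ _ hpred_mem, ← Finset.add_sum_erase _ _ hself_mem]
    congr 2
    refine Finset.sum_congr rfl fun i hi => ?_
    obtain ⟨hij, hij', -⟩ := by simpa only [Finset.mem_erase] using hi
    simp only [φ, cellDiff_update_of_ne hij (show i + 1 ≠ j by omega)]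
  have hφpred := hasDerivAt_cellTerm hψ hμinv hinv (hasDerivAt_cellDiff_update_pred hj hjn hG)
    (hasDerivAt_cellDiff_update_pred (T := S) (n := n) hj hjn hH)
    (by rwa [Function.update_eq_self])
  have hφself := hasDerivAt_cellTerm hψ hμinv hinv (hasDerivAt_cellDiff_update_self hj hG)
    (hasDerivAt_cellDiff_update_self (T := S) (n := n) hj hH)
    (by rwa [Function.update_eq_self])
  simp only [Function.update_eq_self] at hφpred hφself
  rw [hsplit]
  exact hφpred.add (hφself.add_const _)

lemma log_add_eq_of_cellTermDeriv_add_eq_zero {q₁ m₁ q₂ m₂ g x : ℝ} (hg : g ≠ 0)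
    (h : cellTermDeriv ψ μinv q₁ m₁ g (x * g) + cellTermDeriv ψ μinv q₂ m₂ (-g) (-(x * g)) = 0) :
    Real.log q₁ + (x * μinv (m₁ / q₁) - ψ (μinv (m₁ / q₁))) =
      Real.log q₂ + (x * μinv (m₂ / q₂) - ψ (μinv (m₂ / q₂))) := by
  have hfactor : g * ((Real.log q₁ + (x * μinv (m₁ / q₁) - ψ (μinv (m₁ / q₁)))) -
      (Real.log q₂ + (x * μinv (m₂ / q₂) - ψ (μinv (m₂ / q₂))))) = 0 := by
    unfold cellTermDeriv at h
    linear_combination h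
  exact sub_eq_zero.1 ((mul_eq_zero.1 hfactor).resolve_left hg)

end CellTerm

lemma mul_exp_mul_eq_exp_log_add {q : ℝ} (hq : 0 < q) (y c : ℝ) :
    q * (Real.exp y * c) = Real.exp (Real.log q + y) * c := by
  rw [Real.exp_add, Real.exp_log hq, mul_assoc]

theorem smml_posterior_continuous_at_critical_point_general
    (n : ℕ)
    (r : ℝ → ℝ) (hr : Continuous r) (hrpos : ∀ x, 0 < r x)
    (hint : Integrable r) (hnorm : ∫ x, r x = 1)
    (hint1 : Integrable (fun x => x * r x))
    (ψ μ dμ : ℝ → ℝ) (hψ : ∀ θ, HasDerivAt ψ (μ θ) θ)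
    (hμ : ∀ θ, HasDerivAt μ (dμ θ) θ) (hdμpos : ∀ θ, 0 < dμ θ)
    (μinv : ℝ → ℝ) (hinvr : ∀ y, μ (μinv y) = y)
    (h : ℝ → ℝ)
    (F : ℝ → ℝ → ℝ) (hF : ∀ x θ, F x θ = Real.exp (x * θ - ψ θ) * h x)
    (C : ℝ)
    (R : ℝ → ℝ) (hR : ∀ x, R x = ∫ t in Iic x, r t)
    (Q : (ℕ → ℝ) → ℕ → ℝ)
    (hQ : ∀ b i, Q b i = (if i = n then 1 else R (b (i + 1))) - (if i = 0 then 0 else R (b i)))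
    (M : (ℕ → ℝ) → ℕ → ℝ)
    (hM : ∀ b i, M b i =
      (if i = n then ∫ t, t * r t else ∫ t in Iic (b (i + 1)), t * r t) -
      (if i = 0 then 0 else ∫ t in Iic (b i), t * r t))
    (TH : (ℕ → ℝ) → ℕ → ℝ) (hTH : ∀ b i, TH b i = μinv (M b i / Q b i))
    (I1 : (ℕ → ℝ) → ℝ)
    (hI1 : ∀ b, I1 b = C - ∑ i ∈ Finset.range (n + 1),
      Q b i * (Real.log (Q b i) + TH b i * μ (TH b i) - ψ (TH b i)))
    (a : ℕ → ℝ) (ha : ∀ i j, 1 ≤ i → i < j → j ≤ n → a i < a j)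
    (hcrit : ∀ j, 1 ≤ j → j ≤ n →
      HasDerivAt (fun t => I1 (Function.update a j t)) 0 (a j)) :
    ∀ j, 1 ≤ j → j ≤ n →
      Q a j * F (a j) (TH a j) = Q a (j - 1) * F (a j) (TH a (j - 1)) := by
  intro j hj hjn
  have hR' : R = fun x => ∫ t in Iic x, r t := funext hR
  have hQ' : Q = cellDiff R 1 n := funext₂ hQ
  have hM' : M = cellDiff (fun x => ∫ t in Iic x, t * r t) (∫ t, t * r t) n := funext₂ hM
  have hQpos : ∀ i ≤ n, 0 < Q a i := fun i hi => by
    rw [hQ', hR']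
    exact cellDiff_pos (strictMono_integral_Iic hint hrpos) (integral_Iic_pos hint hrpos)
      (hnorm ▸ integral_Iic_lt_integral hint hrpos) ha hi
  have hderiv := hasDerivAt_sum_cellTerm_update (S := ∫ t, t * r t) hψ
    (fun y => (hasDerivAt_rightInverse_of_deriv_pos hμ hdμpos hinvr y).differentiableAt)
    hinvr hj hjn (hR' ▸ hasDerivAt_integral_Iic hr hint (a j))
    (hasDerivAt_integral_Iic (f := fun t => t * r t) (by fun_prop) hint1 (a j))
    (hQ' ▸ hQpos _ (by omega)).ne' (hQ' ▸ hQpos _ hjn).ne'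
  rw [← hQ', ← hM'] at hderiv
  have hzero := (hderiv.const_sub C).unique <| by
    simpa only [hI1, hTH, cellTerm] using hcrit j hj hjn
  have hlog := log_add_eq_of_cellTermDeriv_add_eq_zero (hrpos (a j)).ne' (neg_eq_zero.1 hzero)
  rw [hF, hF, mul_exp_mul_eq_exp_log_add (hQpos j hjn),
    mul_exp_mul_eq_exp_log_add (hQpos _ (by omega)), hTH, hTH, hlog]

/-- Corollary 1: at any interior critical point `a` of `I₁` (in particular at the cut-points
of an SMML estimator), the posterior `x ↦ q(x) f(x|θ̂(x))` is continuous: for each `j` the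
one-sided limits agree, `q_j f(a_j|θ̂_j) = q_{j-1} f(a_j|θ̂_{j-1})`. -/
theorem smml_posterior_continuous_at_critical_point
    (n : ℕ) (hn : 1 ≤ n)
    (r : ℝ → ℝ) (hr : Continuous r) (hrpos : ∀ x, 0 < r x)
    (hint : Integrable r) (hnorm : ∫ x, r x = 1)
    (hint1 : Integrable (fun x => x * r x))
    (ψ μ dμ : ℝ → ℝ) (hψ : ∀ θ, HasDerivAt ψ (μ θ) θ)
    (hμ : ∀ θ, HasDerivAt μ (dμ θ) θ) (hdμcont : Continuous dμ) (hdμpos : ∀ θ, 0 < dμ θ)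
    (μinv : ℝ → ℝ) (hinvl : ∀ θ, μinv (μ θ) = θ) (hinvr : ∀ y, μ (μinv y) = y)
    (h : ℝ → ℝ) (hh : ∀ x, 0 < h x) (hhcont : Continuous h)
    (hinth : Integrable (fun x => r x * Real.log (h x)))
    (F : ℝ → ℝ → ℝ) (hF : ∀ x θ, F x θ = Real.exp (x * θ - ψ θ) * h x)
    (C : ℝ) (hC : C = -∫ x, r x * Real.log (h x))
    (R : ℝ → ℝ) (hR : ∀ x, R x = ∫ t in Iic x, r t)
    (Q : (ℕ → ℝ) → ℕ → ℝ)
    (hQ : ∀ b i, Q b i = (if i = n then 1 else R (b (i + 1))) - (if i = 0 then 0 else R (b i)))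
    (M : (ℕ → ℝ) → ℕ → ℝ)
    (hM : ∀ b i, M b i =
      (if i = n then ∫ t, t * r t else ∫ t in Iic (b (i + 1)), t * r t) -
      (if i = 0 then 0 else ∫ t in Iic (b i), t * r t))
    (TH : (ℕ → ℝ) → ℕ → ℝ) (hTH : ∀ b i, TH b i = μinv (M b i / Q b i))
    (I1 : (ℕ → ℝ) → ℝ)
    (hI1 : ∀ b, I1 b = C - ∑ i ∈ Finset.range (n + 1),
      Q b i * (Real.log (Q b i) + TH b i * μ (TH b i) - ψ (TH b i)))
    (a : ℕ → ℝ) (ha : ∀ i j, 1 ≤ i → i < j → j ≤ n → a i < a j)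
    (hcrit : ∀ j, 1 ≤ j → j ≤ n →
      HasDerivAt (fun t => I1 (Function.update a j t)) 0 (a j)) :
    ∀ j, 1 ≤ j → j ≤ n →
      Q a j * F (a j) (TH a j) = Q a (j - 1) * F (a j) (TH a (j - 1)) :=
  smml_posterior_continuous_at_critical_point_general n r hr hrpos hint hnorm hint1 ψ μ dμ hψ hμ
    hdμpos μinv hinvr h F hF C R hR Q hQ M hM TH hTH I1 hI1 a ha hcrit
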